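/- Let q be a prime power, a a positive integer with 1 ≤ a ≤ q - 2, and let f ∈ F_q[x,y] be a nonzero polynomial of total degree at most a. Then the number of points (s,t) ∈ (F_q^×)² with f(s,t) = 0 is at most a(q-1). Consequently the evaluation code on (F_q^×)² of polynomials of degree ≤ a has minimum distance at least (q-1)² - a(q-1). -/

import Mathlib

/-!
Take `S = F \ {0}`, so that the torus is `S²` and `#S = q - 1`. By Schwartz–Zippel a nonzero
polynomial of total degree `d` in `n + 1` variables vanishes at no more than `d · #S ^ n` points
of `S ^ (n + 1)`, which for `n = 1` is the bound `d (q - 1)`. A codeword `c ≠ 0` comes from a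
nonzero `f`, and its weight is the number of points of the torus minus the zeros of `f`.
-/

open MvPolynomial

/-- Evaluation of a polynomial in two variables at all points of the torus
`(F^×)²`, as a linear map. -/
noncomputable def evalTorus (F : Type) [Field F] :
    MvPolynomial (Fin 2) F →ₗ[F] ((Fˣ × Fˣ) → F) :=
  LinearMap.pi fun t => (aeval ![((t.1 : F)), ((t.2 : F))]).toLinearMap

open Finset

theorem hammingNorm_add_card_zeros {ι : Type*} {β : ι → Type*} [Fintype ι]
    [∀ i, Zero (β i)] [∀ i, DecidableEq (β i)] (x : ∀ i, β i) :
    hammingNorm x + Nat.card {i // x i = 0} = Fintype.card ι := by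
  rw [Nat.card_eq_fintype_card, Fintype.card_subtype, hammingNorm, add_comm,
    card_filter_add_card_filter_not, card_univ]

theorem MvPolynomial.card_zeros_le_totalDegree_mul {R : Type*} [CommRing R] [IsDomain R]
    [DecidableEq R] {n : ℕ} {p : MvPolynomial (Fin (n + 1)) R} (hp : p ≠ 0) (S : Finset R) :
    #{x ∈ Fintype.piFinset fun _ ↦ S | eval x p = 0} ≤ p.totalDegree * #S ^ n := by
  obtain rfl | hS := S.eq_empty_or_nonempty
  · simp
  have hS : (0 : ℚ≥0) < #S := by exact_mod_cast hS.card_pos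
  have := schwartz_zippel_totalDegree hp S
  rw [div_le_div_iff₀ (by positivity) hS, pow_succ, ← mul_assoc,
    mul_le_mul_iff_of_pos_right hS] at this
  exact_mod_cast this

theorem evalTorus_apply (F : Type) [Field F] (f : MvPolynomial (Fin 2) F) (t : Fˣ × Fˣ) :
    evalTorus F f t = eval ![(t.1 : F), t.2] f := by
  simp [evalTorus]

theorem card_zeros_evalTorus_le {F : Type} [Field F] [Fintype F] [DecidableEq F]
    {f : MvPolynomial (Fin 2) F} (hf : f ≠ 0) :
    Nat.card {t : Fˣ × Fˣ // evalTorus F f t = 0} ≤ f.totalDegree * (Fintype.card F - 1) := by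
  have hS : #(univ.erase (0 : F)) = Fintype.card F - 1 := by
    rw [card_erase_of_mem (mem_univ 0), card_univ]
  calc Nat.card {t : Fˣ × Fˣ // evalTorus F f t = 0}
      ≤ #{x ∈ Fintype.piFinset fun _ ↦ univ.erase (0 : F) | eval x f = 0} := by
        rw [← Nat.card_eq_finsetCard]
        refine Nat.card_le_card_of_injective (fun t ↦ ⟨![(t.1.1 : F), t.1.2], ?_⟩) ?_
        · simp [Fin.forall_fin_two, ← evalTorus_apply, t.2]
        · intro s t hst
          have h := congr_arg Subtype.val hst
          exact Subtype.ext (Prod.ext (Units.ext (congr_fun h 0)) (Units.ext (congr_fun h 1)))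
    _ ≤ f.totalDegree * (Fintype.card F - 1) := by
        simpa [hS] using card_zeros_le_totalDegree_mul hf (univ.erase (0 : F))

theorem zeros_bound_total_degree_general (F : Type) [Field F] [Fintype F] [DecidableEq F]
    (a : ℕ) :
    (∀ f : MvPolynomial (Fin 2) F, f ≠ 0 → f.totalDegree ≤ a →
      Nat.card {t : Fˣ × Fˣ // evalTorus F f t = 0} ≤ a * (Fintype.card F - 1)) ∧
    (∀ c ∈ (restrictTotalDegree (Fin 2) F a).map (evalTorus F), c ≠ 0 →
      (Fintype.card F - 1) ^ 2 - a * (Fintype.card F - 1) ≤ hammingNorm c) := by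
  have zeros_le {f : MvPolynomial (Fin 2) F} (hf : f ≠ 0) (hfa : f.totalDegree ≤ a) :
      Nat.card {t : Fˣ × Fˣ // evalTorus F f t = 0} ≤ a * (Fintype.card F - 1) :=
    (card_zeros_evalTorus_le hf).trans (Nat.mul_le_mul_right _ hfa)
  refine ⟨fun f hf hfa ↦ zeros_le hf hfa, ?_⟩
  rintro _ ⟨f, hfa, rfl⟩ hc
  have hf : f ≠ 0 := by rintro rfl; exact hc (map_zero _)
  have hweight := hammingNorm_add_card_zeros (evalTorus F f)
  rw [Fintype.card_prod, Fintype.card_units, ← sq] at hweight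
  have hzeros := zeros_le hf ((mem_restrictTotalDegree _ _ _).mp hfa)
  omega

/-- A nonzero polynomial of total degree at most `a ≤ q - 2` has at most `a(q-1)`
zeros in the torus; consequently the degree-`≤ a` evaluation code has
minimum distance at least `(q-1)² - a(q-1)`. -/
theorem zeros_bound_total_degree (F : Type) [Field F] [Fintype F] [DecidableEq F]
    (a : ℕ) (ha : 1 ≤ a) (haq : a ≤ Fintype.card F - 2) :
    (∀ f : MvPolynomial (Fin 2) F, f ≠ 0 → f.totalDegree ≤ a →
      Nat.card {t : Fˣ × Fˣ // evalTorus F f t = 0} ≤ a * (Fintype.card F - 1)) ∧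
    (∀ c ∈ (restrictTotalDegree (Fin 2) F a).map (evalTorus F), c ≠ 0 →
      (Fintype.card F - 1) ^ 2 - a * (Fintype.card F - 1) ≤ hammingNorm c) :=
  zeros_bound_total_degree_general F a
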